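/- Energy minimization principle: let f : ℝ → [0,∞) be measurable with h := ∫_ℝ f(ξ) dξ and h u := ∫_ℝ ξ f(ξ) dξ finite (u ∈ ℝ arbitrary if h = 0). Then h u²/2 + g h²/2 + g z_b h ≤ ∫_ℝ H( f(ξ), ξ, z_b ) dξ; that is, among all nonnegative kinetic densities with the same first two ξ-moments, the Maxwellian M̄(h,u,·) minimizes the total kinetic entropy. -/

import Mathlib

open MeasureTheory

/-- The kinetic Maxwellian `M̄(h,u,ξ) = (1/(gπ))·max(2gh − (ξ−u)², 0)^{1/2}`. -/
noncomputable def Mbar (g h u ξ : ℝ) : ℝ :=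
  Real.sqrt (max (2 * g * h - (ξ - u) ^ 2) 0) / (g * Real.pi)

/-- The kinetic entropy `H(f,ξ,z) = (ξ²/2) f + (g²π²/6) f³ + g z f`. -/
noncomputable def Hent (g f ξ z : ℝ) : ℝ :=
  ξ ^ 2 / 2 * f + g ^ 2 * Real.pi ^ 2 / 6 * f ^ 3 + g * z * f

/-!
The map `f ↦ H(f, ξ, z)` is convex on `[0, ∞)`, and at `f = M̄(h,u,ξ)` its derivative
`ξ²/2 + (gπ M̄)²/2 + g z` dominates the affine function `g h - u²/2 + g z + u ξ`, with
equality on the support of `M̄`. The tangent-line inequality at `M̄` therefore bounds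
`H(f, ξ, z)` below by `(g h - u²/2 + g z) f + u ξ f - (g²π²/3) M̄³`, whose integral only
involves the two prescribed moments of `f` and `∫ M̄³ = 3h²/(2gπ²)`.
-/

open Real

lemma tangent_le_pow_three {x y : ℝ} (h : 0 ≤ x + 2 * y) :
    3 * y ^ 2 * x - 2 * y ^ 3 ≤ x ^ 3 := by
  nlinarith [mul_nonneg (sq_nonneg (x - y)) h]

lemma integral_sqrt_one_sub_sq_pow_three :
    ∫ x in (-1 : ℝ)..1, √(1 - x ^ 2) ^ 3 = 3 * π / 8 :=
  calc
    _ = ∫ x in sin (-(π / 2))..sin (π / 2), √(1 - x ^ 2) ^ 3 := by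
        rw [sin_neg, sin_pi_div_two]
    _ = ∫ x in -(π / 2)..π / 2, √(1 - sin x ^ 2) ^ 3 * cos x :=
        (intervalIntegral.integral_comp_mul_deriv (fun x _ => hasDerivAt_sin x)
          continuousOn_cos (by fun_prop)).symm
    _ = ∫ x in -(π / 2)..π / 2, cos x ^ (2 + 2) := by
        refine intervalIntegral.integral_congr fun x hx => ?_
        rw [Set.uIcc_of_le (by linarith [pi_pos])] at hx
        rw [← cos_eq_sqrt_one_sub_sin_sq hx.1 hx.2]
        ring
    _ = 3 * π / 8 := by
        rw [integral_cos_pow]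
        norm_num [cos_pi_div_two]
        ring

lemma integral_sqrt_max_one_sub_sq_pow_three :
    ∫ x : ℝ, √(max (1 - x ^ 2) 0) ^ 3 = 3 * π / 8 := by
  have hsupp : Function.support (fun x : ℝ => √(max (1 - x ^ 2) 0) ^ 3) ⊆ Set.Ioc (-1) 1 := by
    intro x hx
    have hpos : 0 < 1 - x ^ 2 := by
      by_contra! hle
      simp [max_eq_right hle] at hx
    constructor <;> nlinarith
  rw [← intervalIntegral.integral_eq_integral_of_support_subset hsupp,
    ← integral_sqrt_one_sub_sq_pow_three]
  refine intervalIntegral.integral_congr fun x hx => ?_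
  rw [Set.uIcc_of_le (by norm_num)] at hx
  rw [max_eq_left (by nlinarith [hx.1, hx.2])]

lemma integral_sqrt_max_sub_sq_pow_three {c : ℝ} (hc : 0 ≤ c) (u : ℝ) :
    ∫ ξ : ℝ, √(max (c - (ξ - u) ^ 2) 0) ^ 3 = 3 * π / 8 * c ^ 2 := by
  rw [integral_sub_right_eq_self (fun x => √(max (c - x ^ 2) 0) ^ 3) u]
  rcases hc.eq_or_lt with rfl | hc
  · simp [fun x : ℝ => max_eq_right (neg_nonpos.2 (sq_nonneg x))]
  set a := √c
  have ha : 0 < a := sqrt_pos.2 hc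
  have hca : c = a ^ 2 := (sq_sqrt hc.le).symm
  have hscale (x : ℝ) :
      √(max (c - x ^ 2) 0) ^ 3 = a ^ 3 * √(max (1 - (a⁻¹ * x) ^ 2) 0) ^ 3 := by
    have hfactor : c - x ^ 2 = a ^ 2 * (1 - (a⁻¹ * x) ^ 2) := by
      rw [hca]; field_simp
    have hmax : max (a ^ 2 * (1 - (a⁻¹ * x) ^ 2)) 0 = a ^ 2 * max (1 - (a⁻¹ * x) ^ 2) 0 := by
      rw [mul_max_of_nonneg _ _ (sq_nonneg a), mul_zero]
    rw [hfactor, hmax, sqrt_mul (sq_nonneg a), sqrt_sq ha.le]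
    ring
  simp_rw [hscale]
  rw [integral_const_mul, Measure.integral_comp_inv_mul_left (fun y => √(max (1 - y ^ 2) 0) ^ 3),
    integral_sqrt_max_one_sub_sq_pow_three, abs_of_pos ha, smul_eq_mul, hca]
  ring

lemma integrable_sqrt_max_sub_sq_pow_three (c u : ℝ) :
    Integrable fun ξ : ℝ => √(max (c - (ξ - u) ^ 2) 0) ^ 3 := by
  refine Continuous.integrable_of_hasCompactSupport (by fun_prop) <|
    HasCompactSupport.intro (isCompact_closedBall u √c) fun ξ hξ => ?_
  rw [Metric.mem_closedBall, not_le, Real.dist_eq] at hξ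
  have : c < (ξ - u) ^ 2 := by
    rw [← sq_abs]; exact (sqrt_lt' ((sqrt_nonneg c).trans_lt hξ)).1 hξ
  simp [max_eq_right (sub_nonpos.2 this.le)]

lemma Mbar_nonneg {g : ℝ} (hg : 0 ≤ g) (h u ξ : ℝ) : 0 ≤ Mbar g h u ξ :=
  div_nonneg (sqrt_nonneg _) (by positivity)

lemma sq_mul_Mbar_sq {g : ℝ} (hg : g ≠ 0) (h u ξ : ℝ) :
    (g * π) ^ 2 * Mbar g h u ξ ^ 2 = max (2 * g * h - (ξ - u) ^ 2) 0 := by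
  rw [Mbar, div_pow, sq_sqrt (le_max_right _ _)]
  field_simp

lemma integrable_Mbar_pow_three (g h u : ℝ) : Integrable fun ξ => Mbar g h u ξ ^ 3 := by
  simp_rw [Mbar, div_pow]
  exact (integrable_sqrt_max_sub_sq_pow_three _ u).div_const _

lemma integral_Mbar_pow_three {g h : ℝ} (hg : 0 < g) (hh : 0 ≤ h) (u : ℝ) :
    ∫ ξ, Mbar g h u ξ ^ 3 = 3 * h ^ 2 / (2 * g * π ^ 2) := by
  simp_rw [Mbar, div_pow]
  rw [integral_div, integral_sqrt_max_sub_sq_pow_three (by positivity)]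
  field_simp
  ring

lemma moments_sub_Mbar_pow_three_le_Hent {g : ℝ} (hg : 0 < g) {f : ℝ} (hf : 0 ≤ f)
    (h u ξ z : ℝ) :
    (g * h - u ^ 2 / 2 + g * z) * f + u * (ξ * f) - g ^ 2 * π ^ 2 / 3 * Mbar g h u ξ ^ 3
      ≤ Hent g f ξ z := by
  have hcube := tangent_le_pow_three (x := f) (y := Mbar g h u ξ)
    (by linarith [Mbar_nonneg hg.le h u ξ])
  have hsupp : 2 * g * h - (ξ - u) ^ 2 ≤ (g * π) ^ 2 * Mbar g h u ξ ^ 2 :=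
    (sq_mul_Mbar_sq hg.ne' h u ξ).symm ▸ le_max_left _ _
  rw [Hent]
  nlinarith [mul_le_mul_of_nonneg_right hsupp hf,
    mul_le_mul_of_nonneg_left hcube (by positivity : (0 : ℝ) ≤ g ^ 2 * π ^ 2 / 6)]

theorem kinetic_entropy_minimization_general
    (g : ℝ) (hg : 0 < g) (zb : ℝ)
    (f : ℝ → ℝ) (hfnn : ∀ ξ, 0 ≤ f ξ)
    (hint : Integrable f) (hint' : Integrable (fun ξ => ξ * f ξ))
    (hintH : Integrable (fun ξ => Hent g (f ξ) ξ zb))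
    (h u : ℝ) (hmom0 : h = ∫ ξ, f ξ) (hmom1 : h * u = ∫ ξ, ξ * f ξ) :
    h * u ^ 2 / 2 + g * h ^ 2 / 2 + g * zb * h ≤ ∫ ξ, Hent g (f ξ) ξ zb := by
  have hh : 0 ≤ h := hmom0 ▸ integral_nonneg hfnn
  have i₀ := hint.const_mul (g * h - u ^ 2 / 2 + g * zb)
  have i₁ := hint'.const_mul u
  have i₀₁ : Integrable fun ξ => (g * h - u ^ 2 / 2 + g * zb) * f ξ + u * (ξ * f ξ) :=
    i₀.add i₁
  have i₂ := (integrable_Mbar_pow_three g h u).const_mul (g ^ 2 * π ^ 2 / 3)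
  calc h * u ^ 2 / 2 + g * h ^ 2 / 2 + g * zb * h
      = ∫ ξ, ((g * h - u ^ 2 / 2 + g * zb) * f ξ + u * (ξ * f ξ)
          - g ^ 2 * π ^ 2 / 3 * Mbar g h u ξ ^ 3) := by
        rw [integral_sub i₀₁ i₂, integral_add i₀ i₁, integral_const_mul,
          integral_const_mul, integral_const_mul, ← hmom0, ← hmom1,
          integral_Mbar_pow_three hg hh u]
        field_simp
        ring
    _ ≤ ∫ ξ, Hent g (f ξ) ξ zb :=
        integral_mono (i₀₁.sub i₂) hintH fun ξ =>
          moments_sub_Mbar_pow_three_le_Hent hg (hfnn ξ) h u ξ zb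

/-- Energy minimization principle: if `f : ℝ → [0,∞)` is measurable with
`h = ∫ f dξ` and `h u = ∫ ξ f(ξ) dξ` finite, then
`h u²/2 + g h²/2 + g z_b h ≤ ∫ H(f(ξ), ξ, z_b) dξ`; i.e. among all nonnegative
kinetic densities with the same first two ξ-moments, the Maxwellian minimizes
the total kinetic entropy. -/
theorem kinetic_entropy_minimization
    (g : ℝ) (hg : 0 < g) (zb : ℝ)
    (f : ℝ → ℝ) (hmeas : Measurable f) (hfnn : ∀ ξ, 0 ≤ f ξ)
    (hint : Integrable f) (hint' : Integrable (fun ξ => ξ * f ξ))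
    (hintH : Integrable (fun ξ => Hent g (f ξ) ξ zb))
    (h u : ℝ) (hmom0 : h = ∫ ξ, f ξ) (hmom1 : h * u = ∫ ξ, ξ * f ξ) :
    h * u ^ 2 / 2 + g * h ^ 2 / 2 + g * zb * h ≤ ∫ ξ, Hent g (f ξ) ξ zb :=
  kinetic_entropy_minimization_general g hg zb f hfnn hint hint' hintH h u hmom0 hmom1
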